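/- Let (Ω, ℱ, ℙ) be a probability space, c ≥ 0, δ ≥ 0, and A₁, A₂ real random variables with 0 ≤ A₁ ≤ A₂ ≤ c almost surely and A₂ − A₁ ≤ δ almost surely. Setting q_i := e^{−A_i}/𝔼[e^{−A_i}] for i = 1, 2, one has 𝔼[|q₂ − q₁|] ≤ 2 e^{2c} δ. -/

import Mathlib

/-!
Write `f = e^{-A₂}` and `g = e^{-A₁}`. For any two integrable weights with `g ≥ 0` and `𝔼 f > 0`,
`f/𝔼f - g/𝔼g = (f - g)/𝔼f + g (1/𝔼f - 1/𝔼g)`, and integrating the absolute value gives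
`𝔼|f/𝔼f - g/𝔼g| ≤ 2 𝔼|f - g| / 𝔼f`. Here `|f - g| ≤ A₂ - A₁ ≤ δ` because `x ↦ e^{-x}` is
1-Lipschitz on `[0, ∞)`, and `𝔼f ≥ e^{-c}`, so the left side is at most `2 e^c δ`.
-/

open MeasureTheory

theorem Real.exp_neg_sub_exp_neg_le {x y : ℝ} (hx : 0 ≤ x) (hxy : x ≤ y) :
    Real.exp (-x) - Real.exp (-y) ≤ y - x := by
  have hdecay : Real.exp (-x) * (x - y + 1) ≤ Real.exp (-y) := by
    calc Real.exp (-x) * (x - y + 1) ≤ Real.exp (-x) * Real.exp (x - y) := by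
          gcongr; exact Real.add_one_le_exp _
      _ = Real.exp (-y) := by rw [← Real.exp_add]; ring_nf
  have hle : Real.exp (-x) ≤ 1 := Real.exp_le_one_iff.2 (by linarith)
  calc Real.exp (-x) - Real.exp (-y) ≤ Real.exp (-x) * (y - x) := by linarith
    _ ≤ 1 * (y - x) := by gcongr
    _ = y - x := one_mul _

section Normalization

variable {α : Type*} [MeasurableSpace α] {μ : Measure α} {f g : α → ℝ}

theorem integral_abs_div_integral_sub_div_integral_le (hf : Integrable f μ)
    (hg : Integrable g μ) (hg₀ : 0 ≤ᵐ[μ] g) (hf₀ : 0 < ∫ x, f x ∂μ) :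
    ∫ x, |f x / ∫ y, f y ∂μ - g x / ∫ y, g y ∂μ| ∂μ
      ≤ 2 * (∫ x, |f x - g x| ∂μ) / ∫ x, f x ∂μ := by
  set F := ∫ y, f y ∂μ
  set G := ∫ y, g y ∂μ
  have hsplit : ∀ᵐ x ∂μ, |f x / F - g x / G| ≤ |f x - g x| / F + |1 / F - 1 / G| * g x := by
    filter_upwards [hg₀] with x hx
    calc |f x / F - g x / G| = |(f x - g x) / F + (1 / F - 1 / G) * g x| := by ring_nf
      _ ≤ |(f x - g x) / F| + |(1 / F - 1 / G) * g x| := abs_add_le _ _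
      _ = |f x - g x| / F + |1 / F - 1 / G| * g x := by
        rw [abs_div, abs_of_pos hf₀, abs_mul, abs_of_nonneg hx]
  have hnormalizer : |1 / F - 1 / G| * G ≤ (∫ x, |f x - g x| ∂μ) / F := by
    rcases (show 0 ≤ G from integral_nonneg_of_ae hg₀).eq_or_lt with hG | hG
    · rw [← hG, mul_zero]; exact div_nonneg (integral_nonneg fun _ => abs_nonneg _) hf₀.le
    calc |1 / F - 1 / G| * G = |(1 / F - 1 / G) * G| := by rw [abs_mul, abs_of_pos hG]
      _ = |G - F| / F := by
        rw [show (1 / F - 1 / G) * G = (G - F) / F by field_simp, abs_div, abs_of_pos hf₀]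
      _ = |∫ x, (f x - g x) ∂μ| / F := by rw [integral_sub hf hg, abs_sub_comm]
      _ ≤ (∫ x, |f x - g x| ∂μ) / F := by gcongr; exact abs_integral_le_integral_abs
  have hdiff : Integrable (fun x => |f x - g x|) μ := (hf.sub hg).abs
  calc ∫ x, |f x / F - g x / G| ∂μ
      ≤ ∫ x, (|f x - g x| / F + |1 / F - 1 / G| * g x) ∂μ :=
        integral_mono_ae ((hf.div_const F).sub (hg.div_const G)).abs
          (hdiff.div_const F |>.add (hg.const_mul _)) hsplit
    _ = (∫ x, |f x - g x| ∂μ) / F + |1 / F - 1 / G| * G := by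
        rw [integral_add (hdiff.div_const F) (hg.const_mul _), integral_div,
          integral_const_mul]
    _ ≤ 2 * (∫ x, |f x - g x| ∂μ) / F := by rw [mul_div_assoc]; linarith

end Normalization

theorem integrable_exp_neg {Ω : Type*} [MeasurableSpace Ω] {μ : Measure Ω} [IsFiniteMeasure μ]
    {A : Ω → ℝ} (hA : Measurable A) (hA₀ : 0 ≤ᵐ[μ] A) :
    Integrable (fun ω => Real.exp (-A ω)) μ := by
  refine (integrable_const (1 : ℝ)).mono' hA.neg.exp.aestronglyMeasurable ?_
  filter_upwards [hA₀] with ω hω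
  rw [Real.norm_of_nonneg (Real.exp_pos _).le, Real.exp_le_one_iff]
  exact neg_nonpos.2 hω

theorem exp_neg_le_integral_exp_neg {Ω : Type*} [MeasurableSpace Ω] {μ : Measure Ω}
    [IsProbabilityMeasure μ] {A : Ω → ℝ} {c : ℝ} (hA : Integrable (fun ω => Real.exp (-A ω)) μ)
    (hAc : ∀ᵐ ω ∂μ, A ω ≤ c) :
    Real.exp (-c) ≤ ∫ ω, Real.exp (-A ω) ∂μ := by
  simpa using integral_mono_ae (integrable_const (Real.exp (-c))) hA
    (hAc.mono fun ω hω => Real.exp_le_exp.2 (neg_le_neg hω))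

/-- if `0 ≤ A₁ ≤ A₂ ≤ c` a.s. and `A₂ − A₁ ≤ δ` a.s., then the normalized
weights `q_i = e^{-A_i}/𝔼[e^{-A_i}]` satisfy `𝔼[|q₂ − q₁|] ≤ 2 e^{2c} δ`. -/
theorem weight_ratio_increment_bound
    {Ω : Type*} [MeasurableSpace Ω] (ℙ : Measure Ω) [IsProbabilityMeasure ℙ]
    (c δ : ℝ) (hc : 0 ≤ c) (hδ : 0 ≤ δ)
    (A₁ A₂ : Ω → ℝ) (hA₁ : Measurable A₁) (hA₂ : Measurable A₂)
    (hbound : ∀ᵐ ω ∂ℙ, 0 ≤ A₁ ω ∧ A₁ ω ≤ A₂ ω ∧ A₂ ω ≤ c)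
    (hδbound : ∀ᵐ ω ∂ℙ, A₂ ω - A₁ ω ≤ δ) :
    (∫ ω, |Real.exp (-(A₂ ω)) / (∫ ω', Real.exp (-(A₂ ω')) ∂ℙ)
          - Real.exp (-(A₁ ω)) / (∫ ω', Real.exp (-(A₁ ω')) ∂ℙ)| ∂ℙ)
      ≤ 2 * Real.exp (2 * c) * δ := by
  have hA₁₀ : 0 ≤ᵐ[ℙ] A₁ := hbound.mono fun _ h => h.1
  have hA₂₀ : 0 ≤ᵐ[ℙ] A₂ := hbound.mono fun _ h => h.1.trans h.2.1
  have hint₁ := integrable_exp_neg hA₁ hA₁₀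
  have hint₂ := integrable_exp_neg hA₂ hA₂₀
  have hZ₂ : Real.exp (-c) ≤ ∫ ω, Real.exp (-A₂ ω) ∂ℙ :=
    exp_neg_le_integral_exp_neg hint₂ (hbound.mono fun _ h => h.2.2)
  have hdiff : ∀ᵐ ω ∂ℙ, |Real.exp (-A₂ ω) - Real.exp (-A₁ ω)| ≤ δ := by
    filter_upwards [hbound, hδbound] with ω h hω
    rw [abs_sub_comm, abs_of_nonneg (sub_nonneg.2 (Real.exp_le_exp.2 (neg_le_neg h.2.1)))]
    exact (Real.exp_neg_sub_exp_neg_le h.1 h.2.1).trans hω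
  have hL1 : ∫ ω, |Real.exp (-A₂ ω) - Real.exp (-A₁ ω)| ∂ℙ ≤ δ := by
    simpa using integral_mono_ae (hint₂.sub hint₁).abs (integrable_const δ) hdiff
  calc _ ≤ 2 * (∫ ω, |Real.exp (-A₂ ω) - Real.exp (-A₁ ω)| ∂ℙ) / ∫ ω, Real.exp (-A₂ ω) ∂ℙ :=
        integral_abs_div_integral_sub_div_integral_le hint₂ hint₁
          (ae_of_all _ fun _ => (Real.exp_pos _).le) ((Real.exp_pos _).trans_le hZ₂)
    _ ≤ 2 * δ / Real.exp (-c) := by gcongr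
    _ = 2 * Real.exp c * δ := by rw [Real.exp_neg]; field_simp
    _ ≤ 2 * Real.exp (2 * c) * δ := by gcongr; linarith
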